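/- arXiv:1504.07257 — 2 statements merged into one kernel-verified Lean document; each statement's English description precedes it below -/
import Mathlib

section
/- Let R be a ring, 'C = 'C_R and a = ass_R('C). Suppose that a is an ideal of R, that the set 'C̄ := π('C) is a dense subset of C_{R̄} in R̄ := R/a (where π : R → R̄, r ↦ r + a), and that C_{R̄} is a left Ore set of R̄. Then: (1) 'C is a left denominator set of R with ass_R('C) = a, and 'C̄ is a left denominator set of R̄ with ass_{R̄}('C̄) = 0; (2) π⁻¹(C_{R̄}) is a left denominator set of R with ass_R(π⁻¹(C_{R̄})) = a, and 'C ⊆ π⁻¹(C_{R̄}); (3) 'Q_{l,cl}(R) := 'C⁻¹R ≅ 'C̄⁻¹R̄ ≅ (π⁻¹(C_{R̄}))⁻¹R ≅ Q_{l,cl}(R̄). -/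
universe u

namespace Bavula

/-- The set of left regular elements of `R`. -/
def lReg (R : Type u) [Ring R] : Set R := {c : R | ∀ x : R, x * c = 0 → x = 0}

/-- The set of right regular elements of `R`. -/
def rReg (R : Type u) [Ring R] : Set R := {c : R | ∀ x : R, c * x = 0 → x = 0}

/-- The set of regular elements of `R`. -/
def reg (R : Type u) [Ring R] : Set R := lReg R ∩ rReg R

/-- `S` is a multiplicative set of `R`. -/
def IsMulSet {R : Type u} [Ring R] (S : Set R) : Prop :=
  (1 : R) ∈ S ∧ (∀ a ∈ S, ∀ b ∈ S, a * b ∈ S) ∧ (0 : R) ∉ S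

/-- `S` is a left Ore set of `R`. -/
def IsLeftOre {R : Type u} [Ring R] (S : Set R) : Prop :=
  IsMulSet S ∧ ∀ s ∈ S, ∀ r : R, ∃ s' ∈ S, ∃ r' : R, s' * r = r' * s

/-- `S` is a left denominator set of `R`. -/
def IsLeftDenom {R : Type u} [Ring R] (S : Set R) : Prop :=
  IsLeftOre S ∧ ∀ r : R, ∀ s ∈ S, r * s = 0 → ∃ t ∈ S, t * r = 0

/-- `S` is a right Ore set of `R`. -/
def IsRightOre {R : Type u} [Ring R] (S : Set R) : Prop :=
  IsMulSet S ∧ ∀ s ∈ S, ∀ r : R, ∃ s' ∈ S, ∃ r' : R, r * s' = s * r'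

/-- `S` is a right denominator set of `R`. -/
def IsRightDenom {R : Type u} [Ring R] (S : Set R) : Prop :=
  IsRightOre S ∧ ∀ r : R, ∀ s ∈ S, s * r = 0 → ∃ t ∈ S, r * t = 0

/-- `ass_R(S) = {r ∈ R | s r = 0 for some s ∈ S}`. -/
def ass {R : Type u} [Ring R] (S : Set R) : Set R := {r : R | ∃ s ∈ S, s * r = 0}

/-- `{r ∈ R | r s = 0 for some s ∈ S}` (the right-sided analogue of `ass`). -/
def rass {R : Type u} [Ring R] (S : Set R) : Set R := {r : R | ∃ s ∈ S, r * s = 0}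

/-- `S` is a (left) dense subset of `T`. -/
def DenseIn {R : Type u} [Ring R] (S T : Set R) : Prop := ∀ t ∈ T, ∃ r : R, r * t ∈ S

/-- `f : R →+* Q` realizes `Q` as the left localization `S⁻¹R` of `R` at `S`:
elements of `S` become units, every element of `Q` is a left fraction `(f s)⁻¹ * (f r)`,
and the kernel of `f` is `ass S`. -/
def IsLeftLoc {R : Type u} [Ring R] (S : Set R) {Q : Type u} [Ring Q] (f : R →+* Q) : Prop :=
  (∀ s ∈ S, IsUnit (f s)) ∧
  (∀ q : Q, ∃ s ∈ S, ∃ r : R, f s * q = f r) ∧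
  (∀ r : R, f r = 0 ↔ r ∈ ass S)

/-- `π : R →+* Q` realizes `Q` as the quotient of `R` by the set `a`
(in particular, `a` is then a two-sided ideal of `R`). -/
def IsQuotBy {R : Type u} [Ring R] (a : Set R) {Q : Type u} [Ring Q] (π : R →+* Q) : Prop :=
  Function.Surjective π ∧ ∀ r : R, π r = 0 ↔ r ∈ a

/-- A semiprime ring (no nonzero nilpotent ideals), elementwise: `x R x = 0 → x = 0`. -/
def SemiprimeRing (A : Type u) [Ring A] : Prop := ∀ x : A, (∀ r : A, x * r * x = 0) → x = 0

/-- `a` is a two-sided ideal of `R`, given as a set. -/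
def IsIdealSet {R : Type u} [Ring R] (a : Set R) : Prop :=
  (0 : R) ∈ a ∧ (∀ x ∈ a, ∀ y ∈ a, x + y ∈ a) ∧ ∀ r : R, ∀ x ∈ a, r * x ∈ a ∧ x * r ∈ a

/-- `a` is a semiprime (two-sided) ideal of `R`, i.e. `R/a` is a semiprime ring. -/
def IsSemiprimeIdealSet {R : Type u} [Ring R] (a : Set R) : Prop :=
  IsIdealSet a ∧ ∀ x : R, (∀ r : R, x * r * x ∈ a) → x ∈ a

/-- `a` is a prime (two-sided) ideal of `R`, i.e. `R/a` is a prime ring. -/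
def IsPrimeIdealSet {R : Type u} [Ring R] (a : Set R) : Prop :=
  IsIdealSet a ∧ a ≠ Set.univ ∧ ∀ x y : R, (∀ r : R, x * r * y ∈ a) → x ∈ a ∨ y ∈ a

/-- The prime radical of `A`: the intersection of all prime ideals of `A`. -/
def primeRadical (A : Type u) [Ring A] : Set A :=
  {x : A | ∀ p : Set A, IsPrimeIdealSet p → x ∈ p}

/-- The set of prime ideals of `R` minimal over `a`. -/
def minPrimesOver {R : Type u} [Ring R] (a : Set R) : Set (Set R) :=
  {p : Set R | IsPrimeIdealSet p ∧ a ⊆ p ∧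
    ∀ q : Set R, IsPrimeIdealSet q → a ⊆ q → q ⊆ p → q = p}

/-- A simple ring: nontrivial, with no two-sided ideals other than `0` and `A`. -/
def SimpleRing (A : Type u) [Ring A] : Prop :=
  (0 : A) ≠ 1 ∧ ∀ a : Set A, IsIdealSet a → a = {0} ∨ a = Set.univ

/-- A simple (left) Artinian ring. -/
def SimpleArtinianRing (A : Type u) [Ring A] : Prop := SimpleRing A ∧ IsArtinianRing A

/-- `I` is an essential left ideal of `R`. -/
def EssIdeal {R : Type u} [Ring R] (I : Submodule R R) : Prop :=
  ∀ J : Submodule R R, J ≠ ⊥ → I ⊓ J ≠ ⊥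

/-- `N` is an essential submodule of the left ideal `M`. -/
def EssIn {R : Type u} [Ring R] (N M : Submodule R R) : Prop :=
  N ≤ M ∧ ∀ W : Submodule R R, W ≤ M → W ≠ ⊥ → N ⊓ W ≠ ⊥

/-- `U` is a uniform left ideal of `R`. -/
def UniformIdeal {R : Type u} [Ring R] (U : Submodule R R) : Prop :=
  U ≠ ⊥ ∧ ∀ V W : Submodule R R, V ≤ U → W ≤ U → V ≠ ⊥ → W ≠ ⊥ → V ⊓ W ≠ ⊥

/-- `udim(_A A) < ∞`: there is a finite direct sum of uniform left ideals of `A`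
which is an essential left ideal of `A`. -/
def FinUdim (A : Type u) [Ring A] : Prop :=
  ∃ (n : ℕ) (U : Fin (n + 1) → Submodule A A),
    (∀ i, UniformIdeal (U i)) ∧
    (∀ i, U i ⊓ (⨆ j, ⨆ (_ : j ≠ i), U j) = ⊥) ∧
    EssIdeal (⨆ i, U i)

/-- `'C_V = {v ∈ V | right multiplication by v is injective on V}` for a left ideal `V`. -/
def lRegIn {R : Type u} [Ring R] (V : Submodule R R) : Set R :=
  {v : R | v ∈ V ∧ ∀ x ∈ V, x * v = 0 → x = 0}

/-- The family `P` of subsets of `R` satisfies the ascending chain condition. -/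
def AccOnSets {R : Type u} [Ring R] (P : Set (Set R)) : Prop :=
  ∀ f : ℕ → Set R, (∀ n, f n ∈ P) → (∀ n, f n ⊆ f (n + 1)) →
    ∃ N : ℕ, ∀ n : ℕ, N ≤ n → f n = f N

/-- The left annihilator of `X` in `R`. -/
def lAnn {R : Type u} [Ring R] (X : Set R) : Set R := {r : R | ∀ x ∈ X, r * x = 0}

/-- The right annihilator of `X` in `R`. -/
def rAnn {R : Type u} [Ring R] (X : Set R) : Set R := {r : R | ∀ x ∈ X, x * r = 0}

/-- A left Goldie ring: a.c.c. on left annihilators and finite left uniform dimension. -/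
def LeftGoldie (A : Type u) [Ring A] : Prop :=
  AccOnSets {B : Set A | ∃ X : Set A, B = lAnn X} ∧ FinUdim A

/-- The set of maximal left denominator sets of `A`. -/
def maxLeftDenom (A : Type u) [Ring A] : Set (Set A) :=
  {S : Set A | IsLeftDenom S ∧ ∀ T : Set A, IsLeftDenom T → S ⊆ T → S = T}

/-- `S_p = {c ∈ R | c + p ∈ C_{R/p}}`: the elements regular modulo `p`. -/
def regMod {R : Type u} [Ring R] (p : Set R) : Set R :=
  {c : R | (∀ x : R, x * c ∈ p → x ∈ p) ∧ ∀ x : R, c * x ∈ p → x ∈ p}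

/-- `I` is a right ideal of `R`, given as a set. -/
def IsRightIdealSet {R : Type u} [Ring R] (I : Set R) : Prop :=
  (0 : R) ∈ I ∧ (∀ x ∈ I, ∀ y ∈ I, x + y ∈ I) ∧ ∀ x ∈ I, ∀ r : R, x * r ∈ I

/-- The left singular ideal `ζ_l(R, a)` of `R` over `a`. -/
def leftSingularOver {R : Type u} [Ring R] (a : Set R) : Set R :=
  {r : R | ∃ I : Submodule R R, EssIdeal I ∧ a ⊆ I ∧ ∀ x ∈ I, x * r = 0}

/-! Let `a = ass('C)` and `T = π⁻¹(C_{R̄})`. Modulo `a` every left regular element becomes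
regular, so `'C ⊆ T`; and since `a` is killed by left regular elements, density of `π('C)`
in `C_{R̄}` lifts to density of `'C` in `T`. The Ore condition of `C_{R̄}` lifts to `T` in the
same way, so `T` is a left denominator set, and density hands the denominator property, the
kernel `ass` and every left localization from `T` down to `'C`. The localizations at `π('C)`
and at `C_{R̄}` pulled back along `π` are left localizations at `'C` as well, and every left
localization at `'C` is isomorphic to the Ore localization `R['C⁻¹]`. -/

open OreLocalization

section Uniqueness

variable {R Q : Type u} [Ring R] [Ring Q] {S : Submonoid R} [OreSet S]

theorem IsLeftLoc.bijective_universalHom {f : R →+* Q} (hf : IsLeftLoc (S : Set R) f)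
    (fS : S →* Qˣ) (hfS : ∀ s : S, f s = fS s) :
    Function.Bijective (universalHom f fS hfS) := by
  refine ⟨(injective_iff_map_eq_zero _).mpr fun x hx => ?_, fun q => ?_⟩
  · induction x using OreLocalization.ind with | _ r s
    rw [universalHom_apply, Units.mul_right_eq_zero] at hx
    obtain ⟨t, ht, htr⟩ := (hf.2.2 r).mp hx
    rw [OreLocalization.expand' r s ⟨t, ht⟩, Submonoid.smul_def, smul_eq_mul, htr, zero_oreDiv]
  · obtain ⟨s, hs, r, hsr⟩ := hf.2.1 q
    refine ⟨r /ₒ ⟨s, hs⟩, ?_⟩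
    rw [universalHom_apply, ← hsr, hfS ⟨s, hs⟩, ← mul_assoc, Units.inv_mul, one_mul]

theorem IsLeftLoc.nonempty_ringEquiv_oreLocalization {f : R →+* Q}
    (hf : IsLeftLoc (S : Set R) f) : Nonempty (R[S⁻¹] ≃+* Q) :=
  ⟨RingEquiv.ofBijective _ (hf.bijective_universalHom
    (IsUnit.liftRight ((f : R →* Q).comp S.subtype) fun s => hf.1 s s.2) fun _ => rfl)⟩

theorem IsLeftLoc.nonempty_ringEquiv {Q' : Type u} [Ring Q'] {f : R →+* Q} {g : R →+* Q'}
    (hf : IsLeftLoc (S : Set R) f) (hg : IsLeftLoc (S : Set R) g) : Nonempty (Q ≃+* Q') :=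
  let ⟨ef⟩ := hf.nonempty_ringEquiv_oreLocalization
  let ⟨eg⟩ := hg.nonempty_ringEquiv_oreLocalization
  ⟨ef.symm.trans eg⟩

end Uniqueness

section Regular

variable {R : Type u} [Ring R]

theorem one_mem_lReg : (1 : R) ∈ lReg R := (nonZeroDivisorsRight R).one_mem

theorem mul_mem_lReg {a b : R} (ha : a ∈ lReg R) (hb : b ∈ lReg R) : a * b ∈ lReg R :=
  (nonZeroDivisorsRight R).mul_mem ha hb

theorem nonempty_oreSet_nonZeroDivisorsRight
    (hore : ∀ s ∈ lReg R, ∀ r : R, ∃ s' ∈ lReg R, ∃ r' : R, s' * r = r' * s) :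
    Nonempty (OreSet (nonZeroDivisorsRight R)) := by
  refine nonempty_oreSet_iff.mpr ⟨fun r₁ r₂ s h => ⟨1, ?_⟩, fun r s => ?_⟩
  · rw [← sub_eq_zero, ← sub_mul] at h
    rw [sub_eq_zero.mp (s.2 _ h)]
  · obtain ⟨s', hs', r', h⟩ := hore s s.2 r
    exact ⟨r', ⟨s', hs'⟩, h⟩

end Regular

section Density

variable {R : Type u} [Ring R] {S T : Set R}

theorem ass_mono (hST : S ⊆ T) : ass S ⊆ ass T := fun _ ⟨s, hs, hsr⟩ => ⟨s, hST hs, hsr⟩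

theorem ass_eq_of_denseIn (hST : S ⊆ T) (hd : DenseIn S T) : ass S = ass T := by
  refine (ass_mono hST).antisymm fun r ⟨t, ht, htr⟩ => ?_
  obtain ⟨u, hu⟩ := hd t ht
  exact ⟨u * t, hu, by rw [mul_assoc, htr, mul_zero]⟩

theorem IsLeftDenom.of_denseIn (hT : IsLeftDenom T) (hST : S ⊆ T) (hd : DenseIn S T)
    (h1 : (1 : R) ∈ S) (hmul : ∀ a ∈ S, ∀ b ∈ S, a * b ∈ S) : IsLeftDenom S := by
  obtain ⟨⟨⟨-, -, h0⟩, hore⟩, hcancel⟩ := hT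
  refine ⟨⟨⟨h1, hmul, fun h => h0 (hST h)⟩, fun s hs r => ?_⟩, fun r s hs hrs => ?_⟩
  · obtain ⟨t, ht, r', h⟩ := hore s (hST hs) r
    obtain ⟨u, hu⟩ := hd t ht
    exact ⟨u * t, hu, u * r', by rw [mul_assoc, h, mul_assoc]⟩
  · obtain ⟨t, ht, htr⟩ := hcancel r s (hST hs) hrs
    obtain ⟨u, hu⟩ := hd t ht
    exact ⟨u * t, hu, by rw [mul_assoc, htr, mul_zero]⟩

theorem IsLeftLoc.of_denseIn {Q : Type u} [Ring Q] {f : R →+* Q} (hf : IsLeftLoc T f)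
    (hST : S ⊆ T) (hd : DenseIn S T) : IsLeftLoc S f := by
  refine ⟨fun s hs => hf.1 s (hST hs), fun q => ?_, fun r => ?_⟩
  · obtain ⟨t, ht, r, h⟩ := hf.2.1 q
    obtain ⟨u, hu⟩ := hd t ht
    exact ⟨u * t, hu, u * r, by rw [map_mul, mul_assoc, h, map_mul]⟩
  · rw [hf.2.2, ass_eq_of_denseIn hST hd]

end Density

section Quotient

variable {R Rb : Type u} [Ring R] [Ring Rb] {π : R →+* Rb}

theorem mem_ass_lReg_of_mul_eq_zero (hπ : IsQuotBy (ass (lReg R)) π) {r t : R}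
    (ht : π t ∈ lReg Rb) (h : r * t = 0) : r ∈ ass (lReg R) :=
  (hπ.2 r).mp (ht _ (by rw [← map_mul, h, map_zero]))

theorem image_lReg_subset_reg (hπ : IsQuotBy (ass (lReg R)) π) : π '' lReg R ⊆ reg Rb := by
  rintro _ ⟨c, hc, rfl⟩
  constructor
  · intro x hx
    obtain ⟨r, rfl⟩ := hπ.1 x
    obtain ⟨d, hd, hdrc⟩ := (hπ.2 (r * c)).mp (by rw [map_mul, hx])
    exact (hπ.2 r).mpr ⟨d, hd, hc _ (by rw [mul_assoc, hdrc])⟩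
  · intro x hx
    obtain ⟨r, rfl⟩ := hπ.1 x
    obtain ⟨d, hd, hdcr⟩ := (hπ.2 (c * r)).mp (by rw [map_mul, hx])
    exact (hπ.2 r).mpr ⟨d * c, mul_mem_lReg hd hc, by rw [mul_assoc, hdcr]⟩

theorem lReg_subset_preimage_reg (hπ : IsQuotBy (ass (lReg R)) π) : lReg R ⊆ π ⁻¹' reg Rb :=
  fun c hc => image_lReg_subset_reg hπ ⟨c, hc, rfl⟩

theorem ass_image_lReg (hπ : IsQuotBy (ass (lReg R)) π) : ass (π '' lReg R) = {0} := by
  refine Set.eq_singleton_iff_unique_mem.mpr ⟨⟨1, ⟨1, one_mem_lReg, map_one π⟩, mul_zero 1⟩, ?_⟩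
  rintro x ⟨s, hs, hsx⟩
  exact (image_lReg_subset_reg hπ hs).2 x hsx

theorem denseIn_lReg_preimage (hπ : IsQuotBy (ass (lReg R)) π) {T : Set Rb}
    (hd : DenseIn (π '' lReg R) T) : DenseIn (lReg R) (π ⁻¹' T) := by
  intro t ht
  obtain ⟨w, c, hc, hcw⟩ := hd (π t) ht
  obtain ⟨u, rfl⟩ := hπ.1 w
  obtain ⟨d, hd, hde⟩ := (hπ.2 (c - u * t)).mp (by rw [map_sub, map_mul, hcw, sub_self])
  rw [mul_sub, sub_eq_zero] at hde
  exact ⟨d * u, by rw [mul_assoc, ← hde]; exact mul_mem_lReg hd hc⟩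

theorem isLeftDenom_preimage_reg (hπ : IsQuotBy (ass (lReg R)) π) (hOre : IsLeftOre (reg Rb)) :
    IsLeftDenom (π ⁻¹' reg Rb) := by
  obtain ⟨⟨h1, hmul, h0⟩, hore⟩ := hOre
  refine ⟨⟨⟨?_, fun a ha b hb => ?_, ?_⟩, fun t ht r => ?_⟩, fun r t ht hrt => ?_⟩
  · simpa only [Set.mem_preimage, map_one] using h1
  · simpa only [Set.mem_preimage, map_mul] using hmul _ ha _ hb
  · simpa only [Set.mem_preimage, map_zero] using h0
  · obtain ⟨x, hx, y, hxy⟩ := hore (π t) ht (π r)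
    obtain ⟨s, rfl⟩ := hπ.1 x
    obtain ⟨r', rfl⟩ := hπ.1 y
    obtain ⟨d, hd, hde⟩ :=
      (hπ.2 (s * r - r' * t)).mp (by rw [map_sub, map_mul, map_mul, hxy, sub_self])
    rw [mul_sub, sub_eq_zero, ← mul_assoc, ← mul_assoc] at hde
    refine ⟨d * s, ?_, d * r', hde⟩
    simpa only [Set.mem_preimage, map_mul] using hmul _ (lReg_subset_preimage_reg hπ hd) _ hx
  · obtain ⟨d, hd, hdr⟩ := mem_ass_lReg_of_mul_eq_zero hπ ht.1 hrt
    exact ⟨d, lReg_subset_preimage_reg hπ hd, hdr⟩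

theorem isLeftDenom_image_lReg (hπ : IsQuotBy (ass (lReg R)) π) (hC : IsLeftOre (lReg R)) :
    IsLeftDenom (π '' lReg R) := by
  obtain ⟨⟨h1, hmul, h0⟩, hore⟩ := hC
  refine ⟨⟨⟨⟨1, h1, map_one π⟩, ?_, ?_⟩, ?_⟩, ?_⟩
  · rintro _ ⟨a, ha, rfl⟩ _ ⟨b, hb, rfl⟩
    exact ⟨a * b, hmul a ha b hb, map_mul π a b⟩
  · rintro ⟨c, hc, hc0⟩
    obtain ⟨d, hd, hdc⟩ := (hπ.2 c).mp hc0
    exact h0 (hc d hdc ▸ hd)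
  · rintro _ ⟨c, hc, rfl⟩ x
    obtain ⟨r, rfl⟩ := hπ.1 x
    obtain ⟨c', hc', r', h⟩ := hore c hc r
    exact ⟨π c', ⟨c', hc', rfl⟩, π r', by rw [← map_mul, ← map_mul, h]⟩
  · rintro x _ ⟨c, hc, rfl⟩ hxc
    refine ⟨1, ⟨1, h1, map_one π⟩, ?_⟩
    rw [one_mul]
    exact (image_lReg_subset_reg hπ ⟨c, hc, rfl⟩).1 x hxc

theorem IsLeftLoc.comp_of_isQuotBy (hπ : IsQuotBy (ass (lReg R)) π) {Q : Type u} [Ring Q]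
    {f : Rb →+* Q} (hf : IsLeftLoc (π '' lReg R) f) : IsLeftLoc (lReg R) (f.comp π) := by
  refine ⟨fun c hc => hf.1 _ ⟨c, hc, rfl⟩, fun q => ?_, fun r => ?_⟩
  · obtain ⟨_, ⟨c, hc, rfl⟩, x, h⟩ := hf.2.1 q
    obtain ⟨r, rfl⟩ := hπ.1 x
    exact ⟨c, hc, r, h⟩
  · rw [RingHom.comp_apply, hf.2.2, ass_image_lReg hπ, Set.mem_singleton_iff, hπ.2]

end Quotient

theorem classicalLeftRegularLeftQuotient_iso_quotient_general {R : Type u} [Ring R]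
    (Rb : Type u) [Ring Rb] (π : R →+* Rb) (hq : IsQuotBy (ass (lReg R)) π)
    (hdense : DenseIn (π '' lReg R) (reg Rb))
    (hOre : IsLeftOre (reg Rb)) :
    -- (1)
    (IsLeftDenom (lReg R) ∧
      IsLeftDenom (π '' lReg R) ∧ ass (π '' lReg R) = {0}) ∧
    -- (2)
    (IsLeftDenom (π ⁻¹' reg Rb) ∧ ass (π ⁻¹' reg Rb) = ass (lReg R) ∧
      lReg R ⊆ π ⁻¹' reg Rb) ∧
    -- (3) 'Q_{l,cl}(R) ≅ 'C̄⁻¹R̄ ≅ (π⁻¹(C_{R̄}))⁻¹R ≅ Q_{l,cl}(R̄)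
    (∀ (Q1 : Type u) (_ : Ring Q1) (f1 : R →+* Q1), IsLeftLoc (lReg R) f1 →
      (∀ (Q2 : Type u) (_ : Ring Q2) (f2 : Rb →+* Q2),
        IsLeftLoc (π '' lReg R) f2 → Nonempty (Q1 ≃+* Q2)) ∧
      (∀ (Q3 : Type u) (_ : Ring Q3) (f3 : R →+* Q3),
        IsLeftLoc (π ⁻¹' reg Rb) f3 → Nonempty (Q1 ≃+* Q3)) ∧
      (∀ (Q4 : Type u) (_ : Ring Q4) (f4 : Rb →+* Q4),
        IsLeftLoc (reg Rb) f4 → Nonempty (Q1 ≃+* Q4))) := by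
  have hCT := lReg_subset_preimage_reg hq
  have hdenseR := denseIn_lReg_preimage hq hdense
  have hT := isLeftDenom_preimage_reg hq hOre
  have hC : IsLeftDenom (lReg R) :=
    hT.of_denseIn hCT hdenseR one_mem_lReg fun _ ha _ hb => mul_mem_lReg ha hb
  refine ⟨⟨hC, isLeftDenom_image_lReg hq hC.1, ass_image_lReg hq⟩,
    ⟨hT, (ass_eq_of_denseIn hCT hdenseR).symm, hCT⟩, fun Q1 _ f1 hf1 => ?_⟩
  obtain ⟨_⟩ := nonempty_oreSet_nonZeroDivisorsRight hC.1.2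
  have iso : ∀ {Q : Type u} [Ring Q] {g : R →+* Q}, IsLeftLoc (lReg R) g → Nonempty (Q1 ≃+* Q) :=
    fun hg => hf1.nonempty_ringEquiv (S := nonZeroDivisorsRight R) hg
  exact ⟨fun Q2 _ f2 hf2 => iso (hf2.comp_of_isQuotBy hq),
    fun Q3 _ f3 hf3 => iso (hf3.of_denseIn hCT hdenseR),
    fun Q4 _ f4 hf4 =>
      iso ((hf4.of_denseIn (image_lReg_subset_reg hq) hdense).comp_of_isQuotBy hq)⟩

/-- Theorem 11Mar15: sufficient conditions for `'Q_{l,cl}(R) ≅ Q_{l,cl}(R/a)` where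
`a = ass_R('C_R)`. -/
theorem classicalLeftRegularLeftQuotient_iso_quotient {R : Type u} [Ring R]
    (hIdeal : IsIdealSet (ass (lReg R)))
    (Rb : Type u) [Ring Rb] (π : R →+* Rb) (hq : IsQuotBy (ass (lReg R)) π)
    (hsub : π '' lReg R ⊆ reg Rb)
    (hdense : DenseIn (π '' lReg R) (reg Rb))
    (hOre : IsLeftOre (reg Rb)) :
    -- (1)
    (IsLeftDenom (lReg R) ∧
      IsLeftDenom (π '' lReg R) ∧ ass (π '' lReg R) = {0}) ∧
    -- (2)
    (IsLeftDenom (π ⁻¹' reg Rb) ∧ ass (π ⁻¹' reg Rb) = ass (lReg R) ∧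
      lReg R ⊆ π ⁻¹' reg Rb) ∧
    -- (3) 'Q_{l,cl}(R) ≅ 'C̄⁻¹R̄ ≅ (π⁻¹(C_{R̄}))⁻¹R ≅ Q_{l,cl}(R̄)
    (∀ (Q1 : Type u) (_ : Ring Q1) (f1 : R →+* Q1), IsLeftLoc (lReg R) f1 →
      (∀ (Q2 : Type u) (_ : Ring Q2) (f2 : Rb →+* Q2),
        IsLeftLoc (π '' lReg R) f2 → Nonempty (Q1 ≃+* Q2)) ∧
      (∀ (Q3 : Type u) (_ : Ring Q3) (f3 : R →+* Q3),
        IsLeftLoc (π ⁻¹' reg Rb) f3 → Nonempty (Q1 ≃+* Q3)) ∧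
      (∀ (Q4 : Type u) (_ : Ring Q4) (f4 : Rb →+* Q4),
        IsLeftLoc (reg Rb) f4 → Nonempty (Q1 ≃+* Q4))) :=
  classicalLeftRegularLeftQuotient_iso_quotient_general Rb π hq hdense hOre

end Bavula
end

section
/- Let R be a ring, S_l(R) the largest left Ore set of R consisting of regular elements, and Q_l(R) := S_l(R)⁻¹R. Then: (1) if Q_l(R) is a left Artinian ring, then S_l(R) = C_R = 'C_R = 'S_l(R) and Q_l(R) = Q_{l,cl}(R) = 'Q_{l,cl}(R) = 'Q_l(R) is a left Artinian ring; (2) if Q_l(R) is a semisimple Artinian ring, then S_l(R) = C_R = 'C_R = 'S_l(R) and Q_l(R) = Q_{l,cl}(R) = 'Q_{l,cl}(R) = 'Q_l(R) is a semisimple Artinian ring. -/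
universe u

namespace Bavula

/-
If `Q_l(R)` is left Artinian, its left regular elements are units. A left regular `c ∈ R` stays
left regular in `Q_l(R)` (if `s⁻¹r · c = 0` then `rc = 0`), so it becomes a unit there. The
elements of `R` that become units in `Q_l(R)` form a left Ore set of regular elements, so they
lie in `S_l(R)` by maximality. Hence `'C_R ⊆ S_l(R) ⊆ C_R ⊆ 'C_R`. A left Ore set of left regular
elements is a left denominator set, so maximality of `'S_l(R)` gives `'S_l(R) = 'C_R` as well, and
all the quotient rings agree because a left localization at a left Ore set is unique up to
isomorphism.
-/

theorem mem_lReg_iff_isRightRegular {R : Type u} [Ring R] {c : R} :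
    c ∈ lReg R ↔ IsRightRegular c :=
  isRightRegular_iff_left_eq_zero_of_mul.symm

theorem IsMulSet.nontrivial {R : Type u} [Ring R] {S : Set R} (hS : IsMulSet S) : Nontrivial R :=
  ⟨⟨1, 0, fun h => hS.2.2 (h ▸ hS.1)⟩⟩

theorem IsLeftOre.isLeftDenom_of_subset_lReg {R : Type u} [Ring R] {S : Set R}
    (hS : IsLeftOre S) (hreg : S ⊆ lReg R) : IsLeftDenom S :=
  ⟨hS, fun r _ hs h => ⟨1, hS.1.1, by rw [one_mul, hreg hs r h]⟩⟩

theorem mem_reg_of_isUnit_map {R Q : Type u} [Ring R] [Ring Q] {f : R →+* Q}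
    (hinj : Function.Injective f) {r : R} (hr : IsUnit (f r)) : r ∈ reg R := by
  refine ⟨fun x hx => hinj ?_, fun x hx => hinj ?_⟩
  · exact hr.mul_right_cancel (by rw [← map_mul, hx, map_zero, zero_mul])
  · exact hr.mul_left_cancel (by rw [← map_mul, hx, map_zero, mul_zero])

theorem map_mul_mul_eq_of_mul_eq {R Q : Type*} [Semiring R] [Semiring Q] (f : R →+* Q)
    {s r : R} {q : Q} (b : R) (h : f s * q = f r) : f (b * s) * q = f (b * r) := by
  rw [map_mul, mul_assoc, h, map_mul]

namespace IsLeftLoc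

variable {R Q : Type u} [Ring R] [Ring Q] {S : Set R} {f : R →+* Q}

theorem injective (hf : IsLeftLoc S f) (hS : S ⊆ rReg R) : Function.Injective f :=
  (injective_iff_map_eq_zero f).2 fun r hr =>
    let ⟨_, hs, hsr⟩ := (hf.2.2 r).1 hr
    hS hs r hsr

theorem map_mem_lReg (hf : IsLeftLoc S f) (hinj : Function.Injective f) {c : R}
    (hc : c ∈ lReg R) : f c ∈ lReg Q := by
  intro y hy
  obtain ⟨s, hs, r, hsy⟩ := hf.2.1 y
  have hr : r = 0 := hc r (hinj (by rw [map_mul, ← hsy, mul_assoc, hy, mul_zero, map_zero]))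
  exact (hf.1 s hs).mul_left_cancel (by rw [hsy, hr, map_zero, mul_zero])

theorem lReg_subset_preimage_units [IsArtinianRing Q] (hf : IsLeftLoc S f)
    (hinj : Function.Injective f) : lReg R ⊆ {r : R | IsUnit (f r)} := fun _ hc =>
  IsArtinianRing.isUnit_iff_isRightRegular.2 <|
    mem_lReg_iff_isRightRegular.1 (hf.map_mem_lReg hinj hc)

theorem isLeftOre_preimage_units [Nontrivial Q] (hf : IsLeftLoc S f)
    (hinj : Function.Injective f) : IsLeftOre {r : R | IsUnit (f r)} := by
  refine ⟨⟨by simp, fun a ha b hb => by simpa using ha.mul hb, by simp⟩, fun s hs r => ?_⟩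
  obtain ⟨t, ht, a, hta⟩ := hf.2.1 (f r * hs.unit⁻¹)
  refine ⟨t, hf.1 t ht, a, hinj ?_⟩
  rw [map_mul, map_mul, ← hta, mul_assoc, mul_assoc, IsUnit.val_inv_mul, mul_one]

theorem map_eq_map_of_map_eq {Q' : Type u} [Ring Q'] {f' : R →+* Q'} (hf : IsLeftLoc S f)
    (hf' : IsLeftLoc S f') {a b : R} (h : f a = f b) : f' a = f' b := by
  rw [← sub_eq_zero, ← map_sub] at h ⊢
  exact (hf'.2.2 _).2 ((hf.2.2 _).1 h)

end IsLeftLoc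

section Uniqueness

variable {R Q₁ Q₂ : Type u} [Ring R] [Ring Q₁] [Ring Q₂] {S : Set R}
  {f₁ : R →+* Q₁} {f₂ : R →+* Q₂}

def SameLeftFrac (S : Set R) (f₁ : R →+* Q₁) (f₂ : R →+* Q₂) (q : Q₁) (x : Q₂) : Prop :=
  ∃ s ∈ S, ∃ r : R, f₁ s * q = f₁ r ∧ f₂ s * x = f₂ r

theorem sameLeftFrac_comm {q : Q₁} {x : Q₂} :
    SameLeftFrac S f₁ f₂ q x ↔ SameLeftFrac S f₂ f₁ x q := by
  simp only [SameLeftFrac, and_comm]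

theorem exists_sameLeftFrac (h₁ : IsLeftLoc S f₁) (h₂ : IsLeftLoc S f₂) (q : Q₁) :
    ∃ x, SameLeftFrac S f₁ f₂ q x := by
  obtain ⟨s, hs, r, hq⟩ := h₁.2.1 q
  refine ⟨(h₂.1 s hs).unit⁻¹ * f₂ r, s, hs, r, hq, ?_⟩
  rw [← mul_assoc, IsUnit.mul_val_inv, one_mul]

namespace SameLeftFrac

variable {q q' : Q₁} {x x' : Q₂}

theorem right_unique (hS : IsLeftOre S) (h₁ : IsLeftLoc S f₁) (h₂ : IsLeftLoc S f₂)
    (hx : SameLeftFrac S f₁ f₂ q x) (hx' : SameLeftFrac S f₁ f₂ q x') : x = x' := by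
  obtain ⟨s, hs, r, h₁r, h₂r⟩ := hx
  obtain ⟨s', hs', r', h₁r', h₂r'⟩ := hx'
  obtain ⟨t, ht, a, hta⟩ := hS.2 s hs s'
  have h₁eq : f₁ (t * r') = f₁ (a * r) := by
    rw [← map_mul_mul_eq_of_mul_eq f₁ t h₁r', ← map_mul_mul_eq_of_mul_eq f₁ a h₁r, hta]
  refine (h₂.1 _ (hS.1.2.1 t ht s' hs')).mul_left_cancel ?_
  calc f₂ (t * s') * x = f₂ (a * r) := by rw [hta, map_mul_mul_eq_of_mul_eq f₂ a h₂r]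
    _ = f₂ (t * r') := (h₁.map_eq_map_of_map_eq h₂ h₁eq).symm
    _ = f₂ (t * s') * x' := (map_mul_mul_eq_of_mul_eq f₂ t h₂r').symm

theorem left_unique (hS : IsLeftOre S) (h₁ : IsLeftLoc S f₁) (h₂ : IsLeftLoc S f₂)
    (hq : SameLeftFrac S f₁ f₂ q x) (hq' : SameLeftFrac S f₁ f₂ q' x) : q = q' :=
  right_unique hS h₂ h₁ (sameLeftFrac_comm.1 hq) (sameLeftFrac_comm.1 hq')

theorem add (hS : IsLeftOre S) (hx : SameLeftFrac S f₁ f₂ q x)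
    (hx' : SameLeftFrac S f₁ f₂ q' x') : SameLeftFrac S f₁ f₂ (q + q') (x + x') := by
  obtain ⟨s, hs, r, h₁r, h₂r⟩ := hx
  obtain ⟨s', hs', r', h₁r', h₂r'⟩ := hx'
  obtain ⟨u, hu, b, hub⟩ := hS.2 s hs s'
  refine ⟨u * s', hS.1.2.1 u hu s' hs', b * r + u * r', ?_, ?_⟩
  · rw [mul_add, map_mul_mul_eq_of_mul_eq f₁ u h₁r', hub, map_mul_mul_eq_of_mul_eq f₁ b h₁r,
      map_add]
  · rw [mul_add, map_mul_mul_eq_of_mul_eq f₂ u h₂r', hub, map_mul_mul_eq_of_mul_eq f₂ b h₂r,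
      map_add]

theorem mul (hS : IsLeftOre S) (hx : SameLeftFrac S f₁ f₂ q x)
    (hx' : SameLeftFrac S f₁ f₂ q' x') : SameLeftFrac S f₁ f₂ (q * q') (x * x') := by
  obtain ⟨s, hs, r, h₁r, h₂r⟩ := hx
  obtain ⟨s', hs', r', h₁r', h₂r'⟩ := hx'
  obtain ⟨t, ht, a, hta⟩ := hS.2 s' hs' r
  refine ⟨t * s, hS.1.2.1 t ht s hs, a * r', ?_, ?_⟩
  · rw [← mul_assoc, map_mul_mul_eq_of_mul_eq f₁ t h₁r, hta,
      map_mul_mul_eq_of_mul_eq f₁ a h₁r']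
  · rw [← mul_assoc, map_mul_mul_eq_of_mul_eq f₂ t h₂r, hta,
      map_mul_mul_eq_of_mul_eq f₂ a h₂r']

end SameLeftFrac

theorem IsLeftLoc.nonempty_ringEquiv_s13 (hS : IsLeftOre S) (h₁ : IsLeftLoc S f₁)
    (h₂ : IsLeftLoc S f₂) : Nonempty (Q₁ ≃+* Q₂) := by
  choose φ hφ using exists_sameLeftFrac h₁ h₂
  have hbij : Function.Bijective φ := by
    refine ⟨fun q q' h => (hφ q).left_unique hS h₁ h₂ (h ▸ hφ q'), fun x => ?_⟩
    obtain ⟨q, hq⟩ := exists_sameLeftFrac h₂ h₁ x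
    exact ⟨q, (hφ q).right_unique hS h₁ h₂ (sameLeftFrac_comm.2 hq)⟩
  exact ⟨{ Equiv.ofBijective φ hbij with
    map_mul' := fun q q' => (hφ (q * q')).right_unique hS h₁ h₂ ((hφ q).mul hS (hφ q'))
    map_add' := fun q q' => (hφ (q + q')).right_unique hS h₁ h₂ ((hφ q).add hS (hφ q')) }⟩

end Uniqueness

section LargestLeftQuotient

variable {R Ql : Type u} [Ring R] [Ring Ql] {Sl : Set R} {fl : R →+* Ql}

theorem lReg_subset_of_isArtinianRing [IsArtinianRing Ql] (hOre : IsLeftOre Sl)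
    (hSlsub : Sl ⊆ reg R) (hSlmax : ∀ T : Set R, IsLeftOre T → T ⊆ reg R → T ⊆ Sl)
    (hloc : IsLeftLoc Sl fl) : lReg R ⊆ Sl := by
  have hinj := hloc.injective fun s hs => (hSlsub hs).2
  have := hOre.1.nontrivial
  have := hinj.nontrivial
  exact (hloc.lReg_subset_preimage_units hinj).trans
    (hSlmax _ (hloc.isLeftOre_preimage_units hinj) fun _ => mem_reg_of_isUnit_map hinj)

theorem leftQuotients_coincide_of_isArtinianRing [IsArtinianRing Ql] (hOre : IsLeftOre Sl)
    (hSlsub : Sl ⊆ reg R) (hSlmax : ∀ T : Set R, IsLeftOre T → T ⊆ reg R → T ⊆ Sl)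
    {Sd : Set R} (hdsub : Sd ⊆ lReg R)
    (hdmax : ∀ T : Set R, IsLeftDenom T → T ⊆ lReg R → T ⊆ Sd) (hloc : IsLeftLoc Sl fl) :
    Sl = reg R ∧ reg R = lReg R ∧ lReg R = Sd ∧
      IsLeftOre (reg R) ∧ IsLeftDenom (lReg R) ∧
      ∀ (Q2 : Type u) (_ : Ring Q2) (f2 : R →+* Q2), IsLeftLoc (reg R) f2 →
        Nonempty (Ql ≃+* Q2) := by
  have hlReg : lReg R ⊆ Sl := lReg_subset_of_isArtinianRing hOre hSlsub hSlmax hloc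
  have hSl_lReg : Sl ⊆ lReg R := fun _ hs => (hSlsub hs).1
  have hSl_reg : Sl = reg R := hSlsub.antisymm fun _ hc => hlReg hc.1
  have hSl_lReg_eq : Sl = lReg R := hSl_lReg.antisymm hlReg
  have hDenom : IsLeftDenom Sl := hOre.isLeftDenom_of_subset_lReg hSl_lReg
  refine ⟨hSl_reg, hSl_reg.symm.trans hSl_lReg_eq,
    hdsub.antisymm' (hlReg.trans (hdmax Sl hDenom hSl_lReg)), hSl_reg ▸ hOre,
    hSl_lReg_eq ▸ hDenom, fun Q2 _ f2 hf2 => ?_⟩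
  exact hloc.nonempty_ringEquiv_s13 hOre (hSl_reg ▸ hf2)

end LargestLeftQuotient

theorem largestLeftQuotient_artinian_consequences_general {R : Type u} [Ring R]
    (Sl : Set R) (hOre : IsLeftOre Sl) (hSlsub : Sl ⊆ reg R)
    (hSlmax : ∀ T : Set R, IsLeftOre T → T ⊆ reg R → T ⊆ Sl)
    (Sd : Set R) (hdsub : Sd ⊆ lReg R)
    (hdmax : ∀ T : Set R, IsLeftDenom T → T ⊆ lReg R → T ⊆ Sd)
    (Ql : Type u) [Ring Ql] (fl : R →+* Ql) (hloc : IsLeftLoc Sl fl) :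
    -- (1)
    (IsArtinianRing Ql →
      Sl = reg R ∧ reg R = lReg R ∧ lReg R = Sd ∧
      IsLeftOre (reg R) ∧ IsLeftDenom (lReg R) ∧
      ∀ (Q2 : Type u) (_ : Ring Q2) (f2 : R →+* Q2), IsLeftLoc (reg R) f2 →
        Nonempty (Ql ≃+* Q2) ∧ IsArtinianRing Q2) ∧
    -- (2)
    (IsSemisimpleRing Ql →
      Sl = reg R ∧ reg R = lReg R ∧ lReg R = Sd ∧
      IsLeftOre (reg R) ∧ IsLeftDenom (lReg R) ∧
      ∀ (Q2 : Type u) (_ : Ring Q2) (f2 : R →+* Q2), IsLeftLoc (reg R) f2 →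
        Nonempty (Ql ≃+* Q2) ∧ IsSemisimpleRing Q2) := by
  refine ⟨fun _ => ?_, fun _ => ?_⟩
  · obtain ⟨h₁, h₂, h₃, h₄, h₅, hiso⟩ :=
      leftQuotients_coincide_of_isArtinianRing hOre hSlsub hSlmax hdsub hdmax hloc
    exact ⟨h₁, h₂, h₃, h₄, h₅, fun Q2 _ f2 hf2 =>
      let ⟨e⟩ := hiso Q2 _ f2 hf2; ⟨⟨e⟩, e.isArtinianRing⟩⟩
  · obtain ⟨h₁, h₂, h₃, h₄, h₅, hiso⟩ :=
      leftQuotients_coincide_of_isArtinianRing hOre hSlsub hSlmax hdsub hdmax hloc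
    exact ⟨h₁, h₂, h₃, h₄, h₅, fun Q2 _ f2 hf2 =>
      let ⟨e⟩ := hiso Q2 _ f2 hf2; ⟨⟨e⟩, e.isSemisimpleRing⟩⟩

/-- Lemma b8Mar15: if the largest left quotient ring `Q_l(R) = S_l(R)⁻¹R` is left
Artinian (resp. semisimple Artinian) then `S_l(R) = C_R = 'C_R = 'S_l(R)` and
`Q_l(R) = Q_{l,cl}(R) = 'Q_{l,cl}(R) = 'Q_l(R)` is left Artinian (resp. semisimple
Artinian). Here `Sl` is `S_l(R)`, `Sd` is `'S_l(R)` and `Ql = Q_l(R)`. -/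
theorem largestLeftQuotient_artinian_consequences {R : Type u} [Ring R]
    (Sl : Set R) (hOre : IsLeftOre Sl) (hSlsub : Sl ⊆ reg R)
    (hSlmax : ∀ T : Set R, IsLeftOre T → T ⊆ reg R → T ⊆ Sl)
    (Sd : Set R) (hd : IsLeftDenom Sd) (hdsub : Sd ⊆ lReg R)
    (hdmax : ∀ T : Set R, IsLeftDenom T → T ⊆ lReg R → T ⊆ Sd)
    (Ql : Type u) [Ring Ql] (fl : R →+* Ql) (hloc : IsLeftLoc Sl fl) :
    -- (1)
    (IsArtinianRing Ql →
      Sl = reg R ∧ reg R = lReg R ∧ lReg R = Sd ∧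
      IsLeftOre (reg R) ∧ IsLeftDenom (lReg R) ∧
      ∀ (Q2 : Type u) (_ : Ring Q2) (f2 : R →+* Q2), IsLeftLoc (reg R) f2 →
        Nonempty (Ql ≃+* Q2) ∧ IsArtinianRing Q2) ∧
    -- (2)
    (IsSemisimpleRing Ql →
      Sl = reg R ∧ reg R = lReg R ∧ lReg R = Sd ∧
      IsLeftOre (reg R) ∧ IsLeftDenom (lReg R) ∧
      ∀ (Q2 : Type u) (_ : Ring Q2) (f2 : R →+* Q2), IsLeftLoc (reg R) f2 →
        Nonempty (Ql ≃+* Q2) ∧ IsSemisimpleRing Q2) :=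
  largestLeftQuotient_artinian_consequences_general Sl hOre hSlsub hSlmax Sd hdsub hdmax Ql fl hloc

end Bavula
end
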